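/- arXiv:2502.15145 — 4 statements merged into one kernel-verified Lean document; each statement's English description precedes it below -/
import Mathlib

section
/- Fix B > 0, an integer m ≥ 1, parameters p ∈ (0, 1] and c > 0, and two weight vectors α, α' in the simplex Δ_{m−1}. Define W_{p,c}^α = {z ∈ R^m_{≥0} : (Σ_i α_i z_i^p)^{1/p} ≥ c}. Then for every x ∈ W_{p,c}^α with ‖x‖_∞ ≤ B, the Euclidean distance from x to W_{p,c}^{α'} satisfies dist(x, W_{p,c}^{α'}) ≤ m^{3/2} B ‖α − α'‖_∞ / p. -/
/-!
In the coordinates `y i = x i ^ p` the set `W_{p,c}^β` is the part of the orthant where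
`∑ β i y i ≥ c ^ p`. Replacing the weights `α` by `α'` lowers `∑ β i y i` by at most
`δ / 2 * B ^ p`, where `δ = ‖α - α'‖₁ ≤ m ‖α - α'‖_∞`, so raising every `y i` by that amount
lands in `W_{p,c}^{α'}`. When `δ ≤ p` the raised point stays in `[0, 2B]^m`, where the mean value
bound `p (2B)^(p-1) |x - z| ≤ |x ^ p - z ^ p|` turns the shift into a move of at most `δ B / p` in
each coordinate. When `m ‖α - α'‖_∞ ≥ p`, the constant point `(B, …, B)`, at distance at most
`√m B`, is already close enough.
-/

theorem mul_rpow_sub_one_mul_sub_le_rpow_sub_rpow {p M x y : ℝ} (hp0 : 0 < p) (hp1 : p ≤ 1)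
    (hx : 0 ≤ x) (hxy : x ≤ y) (hyM : y ≤ M) :
    p * M ^ (p - 1) * (y - x) ≤ y ^ p - x ^ p := by
  refine (convex_Icc 0 M).mul_sub_le_image_sub_of_le_deriv (f := fun t => t ^ p)
    (Real.continuous_rpow_const hp0.le).continuousOn ?_ ?_ x ⟨hx, hxy.trans hyM⟩ y
    ⟨hx.trans hxy, hyM⟩ hxy
  · rw [interior_Icc]
    intro t ht
    exact (Real.differentiableAt_rpow_const_of_ne p ht.1.ne').differentiableWithinAt
  · rw [interior_Icc]
    rintro t ⟨ht0, htM⟩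
    rw [Real.deriv_rpow_const]
    exact mul_le_mul_of_nonneg_left
      (Real.rpow_le_rpow_of_nonpos ht0 htM.le (by linarith)) hp0.le

theorem one_add_half_mul_le_two_rpow {p : ℝ} (hp : 0 ≤ p) : 1 + p / 2 ≤ (2 : ℝ) ^ p := by
  rw [Real.rpow_def_of_pos two_pos]
  nlinarith [Real.add_one_le_exp (Real.log 2 * p), Real.log_two_gt_d9]

theorem abs_rpow_add_mul_rpow_inv_sub_le {p B t x : ℝ} (hp0 : 0 < p) (hp1 : p ≤ 1) (hB : 0 < B)
    (hx0 : 0 ≤ x) (hxB : x ≤ B) (ht0 : 0 ≤ t) (htp : t ≤ p / 2) :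
    |(x ^ p + t * B ^ p) ^ (1 / p) - x| ≤ 2 * t * B / p := by
  set z := (x ^ p + t * B ^ p) ^ (1 / p) with hz
  have hxp : x ^ p ≤ B ^ p := Real.rpow_le_rpow hx0 hxB hp0.le
  have htB : 0 ≤ t * B ^ p := by positivity
  have hzp : z ^ p = x ^ p + t * B ^ p := by
    rw [hz, one_div, Real.rpow_inv_rpow (by positivity) hp0.ne']
  have hz0 : 0 ≤ z := by positivity
  have hxz : x ≤ z := by
    rw [← Real.rpow_le_rpow_iff hx0 hz0 hp0, hzp]
    linarith
  have hz2B : z ≤ 2 * B := by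
    rw [← Real.rpow_le_rpow_iff hz0 (by positivity) hp0, hzp, Real.mul_rpow two_pos.le hB.le]
    calc x ^ p + t * B ^ p ≤ (1 + p / 2) * B ^ p := by nlinarith [Real.rpow_pos_of_pos hB p]
      _ ≤ 2 ^ p * B ^ p := mul_le_mul_of_nonneg_right (one_add_half_mul_le_two_rpow hp0.le)
          (by positivity)
  have hmvt := mul_rpow_sub_one_mul_sub_le_rpow_sub_rpow hp0 hp1 hx0 hxz hz2B
  have hBp : B ^ p = B ^ (p - 1) * B := by
    rw [← Real.rpow_add_one hB.ne']
    ring_nf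
  rw [hzp, add_sub_cancel_left, Real.mul_rpow two_pos.le hB.le, hBp] at hmvt
  have hcancel : p * 2 ^ (p - 1) * (z - x) ≤ t * B := by
    refine le_of_mul_le_mul_left ?_ (Real.rpow_pos_of_pos hB (p - 1))
    linarith
  have hhalf : (1 : ℝ) / 2 ≤ 2 ^ (p - 1) := by
    rw [show (1 : ℝ) / 2 = 2 ^ (-1 : ℝ) by norm_num]
    exact Real.rpow_le_rpow_of_exponent_le (by norm_num) (by linarith)
  rw [abs_of_nonneg (sub_nonneg.2 hxz), le_div_iff₀ hp0]
  nlinarith [mul_le_mul_of_nonneg_left hhalf (mul_nonneg hp0.le (sub_nonneg.2 hxz))]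

theorem sum_sub_mul_le_half_mul_sum_abs_sub {ι : Type*} [Fintype ι] {α α' y : ι → ℝ} {M : ℝ}
    (hsum : ∑ i, α i = ∑ i, α' i) (hy0 : ∀ i, 0 ≤ y i) (hyM : ∀ i, y i ≤ M) :
    ∑ i, (α i - α' i) * y i ≤ M / 2 * ∑ i, |α i - α' i| := by
  have hcentre : ∑ i, (α i - α' i) * (M / 2) = 0 := by
    rw [← Finset.sum_mul, Finset.sum_sub_distrib, hsum, sub_self, zero_mul]
  calc ∑ i, (α i - α' i) * y i = ∑ i, (α i - α' i) * (y i - M / 2) := by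
        simp only [mul_sub, Finset.sum_sub_distrib, hcentre, sub_zero]
    _ ≤ ∑ i, |α i - α' i| * (M / 2) := by
        refine Finset.sum_le_sum fun i _ => ?_
        calc (α i - α' i) * (y i - M / 2) ≤ |α i - α' i| * |y i - M / 2| := by
              rw [← abs_mul]; exact le_abs_self _
          _ ≤ |α i - α' i| * (M / 2) := by
              gcongr
              rw [abs_le]
              constructor <;> linarith [hy0 i, hyM i]
    _ = M / 2 * ∑ i, |α i - α' i| := by rw [← Finset.sum_mul, mul_comm]

theorem EuclideanSpace.dist_le_sqrt_card_mul {ι : Type*} [Fintype ι] {x y : EuclideanSpace ℝ ι}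
    {K : ℝ} (hK : 0 ≤ K) (h : ∀ i, |x i - y i| ≤ K) : dist x y ≤ √(Fintype.card ι) * K := by
  rw [EuclideanSpace.dist_eq, ← Real.sqrt_sq hK, ← Real.sqrt_mul (Nat.cast_nonneg _)]
  gcongr
  calc ∑ i, dist (x i) (y i) ^ 2 ≤ ∑ _i : ι, K ^ 2 := by
        gcongr with i
        rw [Real.dist_eq]
        exact h i
    _ = Fintype.card ι * K ^ 2 := by simp

section PowerMeanSuperlevel

variable {ι : Type*} [Fintype ι] {p c B : ℝ} {α α' : ι → ℝ} {x : EuclideanSpace ℝ ι}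

/-- The set `W_{p,c}^β`. -/
def powerMeanSuperlevel (p c : ℝ) (β : ι → ℝ) : Set (EuclideanSpace ℝ ι) :=
  {z | (∀ i, 0 ≤ z i) ∧ c ≤ (∑ i, β i * z i ^ p) ^ (1 / p)}

theorem mem_powerMeanSuperlevel_iff {β : ι → ℝ} (hp : 0 < p) (hc : 0 ≤ c) (hβ : ∀ i, 0 ≤ β i)
    {z : EuclideanSpace ℝ ι} :
    z ∈ powerMeanSuperlevel p c β ↔ (∀ i, 0 ≤ z i) ∧ c ^ p ≤ ∑ i, β i * z i ^ p := by
  refine and_congr_right fun hz => ?_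
  rw [one_div, Real.le_rpow_inv_iff_of_pos hc
    (Finset.sum_nonneg fun i _ => mul_nonneg (hβ i) (Real.rpow_nonneg (hz i) p)) hp]

theorem infDist_powerMeanSuperlevel_le_sqrt_card_mul (hp : 0 < p) (hc : 0 ≤ c) (hB : 0 ≤ B)
    (hα : ∀ i, 0 ≤ α i) (hαsum : ∑ i, α i = 1) (hα' : ∀ i, 0 ≤ α' i) (hα'sum : ∑ i, α' i = 1)
    (hx : x ∈ powerMeanSuperlevel p c α) (hxB : ∀ i, x i ≤ B) :
    Metric.infDist x (powerMeanSuperlevel p c α') ≤ √(Fintype.card ι) * B := by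
  obtain ⟨hx0, hcx⟩ := (mem_powerMeanSuperlevel_iff hp hc hα).1 hx
  have hcB : c ^ p ≤ B ^ p := calc
    c ^ p ≤ ∑ i, α i * x i ^ p := hcx
    _ ≤ ∑ i, α i * B ^ p := Finset.sum_le_sum fun i _ =>
        mul_le_mul_of_nonneg_left (Real.rpow_le_rpow (hx0 i) (hxB i) hp.le) (hα i)
    _ = B ^ p := by rw [← Finset.sum_mul, hαsum, one_mul]
  let w : EuclideanSpace ℝ ι := WithLp.toLp 2 fun _ => B
  have hw : w ∈ powerMeanSuperlevel p c α' := by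
    refine (mem_powerMeanSuperlevel_iff hp hc hα').2 ⟨fun _ => hB, ?_⟩
    simpa [w, ← Finset.sum_mul, hα'sum] using hcB
  refine (Metric.infDist_le_dist_of_mem hw).trans
    (EuclideanSpace.dist_le_sqrt_card_mul hB fun i => ?_)
  rw [abs_le]
  constructor <;> simp only [w] <;> linarith [hx0 i, hxB i]

theorem infDist_powerMeanSuperlevel_le_of_sum_abs_sub_le (hp0 : 0 < p) (hp1 : p ≤ 1)
    (hc : 0 ≤ c) (hB : 0 < B) (hα : ∀ i, 0 ≤ α i) (hαsum : ∑ i, α i = 1)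
    (hα' : ∀ i, 0 ≤ α' i) (hα'sum : ∑ i, α' i = 1)
    (hx : x ∈ powerMeanSuperlevel p c α) (hxB : ∀ i, x i ≤ B)
    (hδ : ∑ i, |α i - α' i| ≤ p) :
    Metric.infDist x (powerMeanSuperlevel p c α') ≤
      √(Fintype.card ι) * ((∑ i, |α i - α' i|) * B / p) := by
  set δ := ∑ i, |α i - α' i|
  obtain ⟨hx0, hcx⟩ := (mem_powerMeanSuperlevel_iff hp0 hc hα).1 hx
  have hδ0 : 0 ≤ δ := Finset.sum_nonneg fun i _ => abs_nonneg _
  have hshift : ∑ i, (α i - α' i) * x i ^ p ≤ B ^ p / 2 * δ :=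
    sum_sub_mul_le_half_mul_sum_abs_sub (hαsum.trans hα'sum.symm)
      (fun i => Real.rpow_nonneg (hx0 i) p) (fun i => Real.rpow_le_rpow (hx0 i) (hxB i) hp0.le)
  have hbase : ∀ i, 0 ≤ x i ^ p + δ / 2 * B ^ p := fun i =>
    add_nonneg (Real.rpow_nonneg (hx0 i) p) (by positivity)
  let w : EuclideanSpace ℝ ι := WithLp.toLp 2 fun i => (x i ^ p + δ / 2 * B ^ p) ^ (1 / p)
  have hwp : ∀ i, w i ^ p = x i ^ p + δ / 2 * B ^ p := fun i => by
    simp only [w, one_div]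
    exact Real.rpow_inv_rpow (hbase i) hp0.ne'
  have hw : w ∈ powerMeanSuperlevel p c α' := by
    refine (mem_powerMeanSuperlevel_iff hp0 hc hα').2
      ⟨fun i => Real.rpow_nonneg (hbase i) _, ?_⟩
    calc c ^ p ≤ ∑ i, α i * x i ^ p := hcx
      _ = ∑ i, α' i * x i ^ p + ∑ i, (α i - α' i) * x i ^ p := by
          rw [← Finset.sum_add_distrib]
          exact Finset.sum_congr rfl fun i _ => by ring
      _ ≤ ∑ i, α' i * x i ^ p + δ / 2 * B ^ p := by linarith
      _ = ∑ i, α' i * w i ^ p := by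
          simp only [hwp, mul_add, Finset.sum_add_distrib, ← Finset.sum_mul, hα'sum, one_mul]
  refine (Metric.infDist_le_dist_of_mem hw).trans
    (EuclideanSpace.dist_le_sqrt_card_mul (by positivity) fun i => ?_)
  rw [abs_sub_comm]
  calc |w i - x i| ≤ 2 * (δ / 2) * B / p :=
        abs_rpow_add_mul_rpow_inv_sub_le hp0 hp1 hB (hx0 i) (hxB i) (by positivity) (by linarith)
    _ = δ * B / p := by ring

end PowerMeanSuperlevel

/-- Estimation error of the parameterized target set (Lemma on target sets):
for `p ∈ (0,1]` and weights `α, α'` in the simplex, every bounded point of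
`W_{p,c}^α` is within Euclidean distance `m^{3/2} B ‖α − α'‖_∞ / p` of
`W_{p,c}^{α'}`. -/
theorem stmt_5 {m : ℕ} (hm : 1 ≤ m) (B : ℝ) (hB : 0 < B)
    (p : ℝ) (hp0 : 0 < p) (hp1 : p ≤ 1) (c : ℝ) (hc : 0 < c)
    (α α' : Fin m → ℝ)
    (hα : ∀ i, 0 ≤ α i) (hαsum : ∑ i, α i = 1)
    (hα' : ∀ i, 0 ≤ α' i) (hα'sum : ∑ i, α' i = 1)
    (W : (Fin m → ℝ) → Set (EuclideanSpace ℝ (Fin m)))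
    (hWdef : ∀ β, W β =
      {z | (∀ i, 0 ≤ z i) ∧ c ≤ (∑ i, β i * z i ^ p) ^ (1 / p)})
    (x : EuclideanSpace ℝ (Fin m)) (hx : x ∈ W α) (hxB : ∀ i, |x i| ≤ B) :
    Metric.infDist x (W α') ≤
      (m : ℝ) ^ ((3 : ℝ) / 2) * B *
        (Finset.univ.sup' (Finset.univ_nonempty_iff.mpr
          (Fin.pos_iff_nonempty.mp hm)) fun i => |α i - α' i|) / p := by
  obtain rfl : W = powerMeanSuperlevel p c := funext hWdef
  set ε := Finset.univ.sup' _ fun i => |α i - α' i|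
  have hδ : ∑ i, |α i - α' i| ≤ m * ε := by
    simpa using Finset.sum_le_card_nsmul _ _ ε fun i hi => Finset.le_sup' _ hi
  have hxB' : ∀ i, x i ≤ B := fun i => (abs_le.1 (hxB i)).2
  have hm32 : (m : ℝ) ^ ((3 : ℝ) / 2) = √m * m := by
    rw [Real.sqrt_eq_rpow, ← Real.rpow_add_one' (Nat.cast_nonneg m) (by norm_num)]
    norm_num
  rw [hm32]
  rcases le_or_gt p (m * ε) with hlarge | hsmall
  · calc Metric.infDist x (powerMeanSuperlevel p c α') ≤ √(Fintype.card (Fin m)) * B :=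
          infDist_powerMeanSuperlevel_le_sqrt_card_mul hp0 hc.le hB.le hα hαsum hα' hα'sum hx hxB'
      _ ≤ √m * B * (m * ε / p) := by
          rw [Fintype.card_fin]
          exact le_mul_of_one_le_right (by positivity) ((one_le_div hp0).2 hlarge)
      _ = √m * m * B * ε / p := by ring
  · calc Metric.infDist x (powerMeanSuperlevel p c α')
        ≤ √(Fintype.card (Fin m)) * ((∑ i, |α i - α' i|) * B / p) :=
          infDist_powerMeanSuperlevel_le_of_sum_abs_sub_le hp0 hp1 hc.le hB hα hαsum hα' hα'sum
            hx hxB' (hδ.trans hsmall.le)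
      _ ≤ √m * (m * ε * B / p) := by
          rw [Fintype.card_fin]
          gcongr
      _ = √m * m * B * ε / p := by ring
end

section
/- Let A₁, A₂ ⊆ R^m be nonempty closed convex sets, let x ∈ R^m, and suppose the Hausdorff-type distance d_H := max{sup_{a ∈ A₁} dist(a, A₂), sup_{a ∈ A₂} dist(a, A₁)} is finite. Then the projections of x onto the two sets satisfy ‖Π_{A₁}(x) − Π_{A₂}(x)‖₂² ≤ 4·dist(x, A₁)·d_H + 2·d_H². -/
open scoped RealInnerProductSpace

/-- Distance between projections of a point onto two nearby closed convex
sets, in terms of a Hausdorff-type distance bound `dH` between the sets. -/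
theorem stmt_6 {m : ℕ} (A₁ A₂ : Set (EuclideanSpace ℝ (Fin m)))
    (h₁ne : A₁.Nonempty) (h₂ne : A₂.Nonempty)
    (h₁cl : IsClosed A₁) (h₂cl : IsClosed A₂)
    (h₁conv : Convex ℝ A₁) (h₂conv : Convex ℝ A₂)
    (x p₁ p₂ : EuclideanSpace ℝ (Fin m))
    (hp₁ : p₁ ∈ A₁) (hp₁proj : ∀ w ∈ A₁, dist x p₁ ≤ dist x w)
    (hp₂ : p₂ ∈ A₂) (hp₂proj : ∀ w ∈ A₂, dist x p₂ ≤ dist x w)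
    (dH : ℝ)
    (hdH₁ : ∀ a ∈ A₁, Metric.infDist a A₂ ≤ dH)
    (hdH₂ : ∀ a ∈ A₂, Metric.infDist a A₁ ≤ dH) :
    ‖p₁ - p₂‖ ^ 2 ≤ 4 * dist x p₁ * dH + 2 * dH ^ 2 := by
  have hdH0 : 0 ≤ dH := le_trans Metric.infDist_nonneg (hdH₁ p₁ hp₁)
  obtain ⟨q, hq, hq'⟩ := h₂cl.exists_infDist_eq_dist h₂ne p₁
  obtain ⟨r, hr, hr'⟩ := h₁cl.exists_infDist_eq_dist h₁ne p₂
  have hq2 : dist p₁ q ≤ dH := hq' ▸ hdH₁ p₁ hp₁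
  have hr2 : dist p₂ r ≤ dH := hr' ▸ hdH₂ p₂ hp₂
  have obtuse : ∀ (A : Set (EuclideanSpace ℝ (Fin m))) (p : EuclideanSpace ℝ (Fin m)),
      Convex ℝ A → p ∈ A → (∀ w ∈ A, dist x p ≤ dist x w) →
      ∀ w ∈ A, ⟪x - p, w - p⟫ ≤ 0 := by
    intro A p hconv hp hproj
    haveI : Nonempty A := ⟨⟨p, hp⟩⟩
    have hinf : ‖x - p‖ = ⨅ w : A, ‖x - (w : EuclideanSpace ℝ (Fin m))‖ := by
      apply le_antisymm
      · exact le_ciInf fun w => by simpa [dist_eq_norm] using hproj w w.2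
      · apply ciInf_le _ (⟨p, hp⟩ : A)
        refine ⟨0, ?_⟩
        rintro b ⟨w, rfl⟩
        exact norm_nonneg _
    exact (norm_eq_iInf_iff_real_inner_le_zero hconv hp).1 hinf
  have h1 : ⟪x - p₁, r - p₁⟫ ≤ 0 := obtuse A₁ p₁ h₁conv hp₁ hp₁proj r hr
  have h2 : ⟪x - p₂, q - p₂⟫ ≤ 0 := obtuse A₂ p₂ h₂conv hp₂ hp₂proj q hq
  have hd2 : dist x p₂ ≤ dist x p₁ + dH := by
    calc dist x p₂ ≤ dist x q := hp₂proj q hq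
    _ ≤ dist x p₁ + dist p₁ q := dist_triangle _ _ _
    _ ≤ dist x p₁ + dH := by linarith
  have b1 : ⟪p₁ - x, r - p₂⟫ ≤ dist x p₁ * dH := by
    calc ⟪p₁ - x, r - p₂⟫ ≤ ‖p₁ - x‖ * ‖r - p₂‖ := real_inner_le_norm _ _
    _ ≤ dist x p₁ * dH := by
        have e1 : ‖p₁ - x‖ = dist x p₁ := by rw [dist_comm, dist_eq_norm]
        have e2 : ‖r - p₂‖ = dist p₂ r := by rw [dist_comm, dist_eq_norm]
        rw [e1, e2]
        exact mul_le_mul_of_nonneg_left hr2 dist_nonneg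
  have b2 : ⟪x - p₂, p₁ - q⟫ ≤ (dist x p₁ + dH) * dH := by
    calc ⟪x - p₂, p₁ - q⟫ ≤ ‖x - p₂‖ * ‖p₁ - q‖ := real_inner_le_norm _ _
    _ ≤ (dist x p₁ + dH) * dH := by
        rw [show ‖x - p₂‖ = dist x p₂ from (dist_eq_norm _ _).symm,
          show ‖p₁ - q‖ = dist p₁ q from (dist_eq_norm _ _).symm]
        exact mul_le_mul hd2 hq2 dist_nonneg (by positivity)
  have key : ‖p₁ - p₂‖ ^ 2 =
      ⟪x - p₁, r - p₁⟫ + ⟪x - p₂, q - p₂⟫ + ⟪p₁ - x, r - p₂⟫ + ⟪x - p₂, p₁ - q⟫ := by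
    rw [← real_inner_self_eq_norm_sq]
    simp only [inner_sub_left, inner_sub_right]
    ring
  have hdn : 0 ≤ dist x p₁ := dist_nonneg
  nlinarith [h1, h2, b1, b2, mul_nonneg hdn hdH0, sq_nonneg dH]
end

section
/- Let m ≥ 2, B ≥ 1, and let X ∈ [0, B]^m and α, α̂ ∈ Δ_{m−1}. Define the softmax distribution P_β(i) = exp(β_i X_i) / Σ_j exp(β_j X_j) for β ∈ Δ_{m−1}. Then the total variation distance between P_α and P_{α̂} is at least (1/(m² e^{2B})) · max_i X_i |α_i − α̂_i|. -/
open scoped BigOperators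

private lemma softmax_sum_le {m : ℕ} (B : ℝ) (hB : 1 ≤ B)
    (X α : Fin m → ℝ) (hX : ∀ i, 0 ≤ X i ∧ X i ≤ B)
    (hα : ∀ i, 0 ≤ α i) (hαsum : ∑ i, α i = 1) :
    ∑ j, Real.exp (α j * X j) ≤ (m : ℝ) * Real.exp B := by
  calc ∑ j, Real.exp (α j * X j) ≤ ∑ _j : Fin m, Real.exp B := by
        apply Finset.sum_le_sum
        intro j _
        apply Real.exp_le_exp.2
        have h1 : α j ≤ 1 := by
          have h := Finset.single_le_sum (f := α) (fun i _ => hα i) (Finset.mem_univ j)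
          rw [hαsum] at h; exact h
        calc α j * X j ≤ 1 * X j := mul_le_mul_of_nonneg_right h1 (hX j).1
          _ = X j := one_mul _
          _ ≤ B := (hX j).2
    _ = (m : ℝ) * Real.exp B := by
        rw [Finset.sum_const, Finset.card_univ, Fintype.card_fin, nsmul_eq_mul]

set_option maxHeartbeats 1000000 in
private lemma aux_main {m : ℕ} (hm : 2 ≤ m) (B : ℝ) (hB : 1 ≤ B)
    (X α αh : Fin m → ℝ)
    (hX : ∀ i, 0 ≤ X i ∧ X i ≤ B)
    (hα : ∀ i, 0 ≤ α i) (hαsum : ∑ i, α i = 1)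
    (hαh : ∀ i, 0 ≤ αh i) (hαhsum : ∑ i, αh i = 1)
    (l : Fin m) (hle : α l ≤ αh l) :
    (1 / ((m : ℝ) ^ 2 * Real.exp (2 * B))) * (X l * (αh l - α l)) ≤
      ∑ i, |Real.exp (α i * X i) / (∑ j, Real.exp (α j * X j)) -
            Real.exp (αh i * X i) / (∑ j, Real.exp (αh j * X j))| := by
  set S := ∑ j, Real.exp (α j * X j) with hSdef
  set T := ∑ j, Real.exp (αh j * X j) with hTdef
  have hm0 : (0:ℝ) < m := by positivity
  have hm2 : (2:ℝ) ≤ m := by exact_mod_cast hm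
  have hS0 : 0 < S := Finset.sum_pos (fun j _ => Real.exp_pos _) ⟨l, Finset.mem_univ l⟩
  have hT0 : 0 < T := Finset.sum_pos (fun j _ => Real.exp_pos _) ⟨l, Finset.mem_univ l⟩
  have hSle : S ≤ (m : ℝ) * Real.exp B := softmax_sum_le B hB X α hX hα hαsum
  have hTle : T ≤ (m : ℝ) * Real.exp B := softmax_sum_le B hB X αh hX hαh hαhsum
  have hMe : (0:ℝ) < (m : ℝ) * Real.exp B := by positivity
  have hsum_nonneg : (0:ℝ) ≤ ∑ i, |Real.exp (α i * X i) / S - Real.exp (αh i * X i) / T| :=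
    Finset.sum_nonneg fun i _ => abs_nonneg _
  set ε := αh l - α l with hεdef
  have hε0 : 0 ≤ ε := by simp [hεdef]; linarith
  by_cases hzero : X l * ε = 0
  · rw [hzero, mul_zero]; exact hsum_nonneg
  · have hXl0 : 0 < X l := lt_of_le_of_ne (hX l).1 (by
      intro h; apply hzero; rw [← h, zero_mul])
    have hεpos : 0 < ε := lt_of_le_of_ne hε0 (by
      intro h; apply hzero; rw [← h, mul_zero])
    -- find j' ≠ l with αh j' ≤ α j'
    obtain ⟨j', hj'mem, hj'⟩ : ∃ j' ∈ Finset.univ.erase l, αh j' ≤ α j' := by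
      by_contra hcon
      push_neg at hcon
      have hne : (Finset.univ.erase l).Nonempty := by
        rw [← Finset.card_pos, Finset.card_erase_of_mem (Finset.mem_univ l),
          Finset.card_univ, Fintype.card_fin]
        omega
      have hlt : ∑ j ∈ Finset.univ.erase l, α j < ∑ j ∈ Finset.univ.erase l, αh j :=
        Finset.sum_lt_sum_of_nonempty hne hcon
      have h1 : ∑ j ∈ Finset.univ.erase l, α j = 1 - α l := by
        rw [← hαsum]
        rw [← Finset.add_sum_erase _ α (Finset.mem_univ l)]; ring
      have h2 : ∑ j ∈ Finset.univ.erase l, αh j = 1 - αh l := by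
        rw [← hαhsum]
        rw [← Finset.add_sum_erase _ αh (Finset.mem_univ l)]; ring
      rw [h1, h2] at hlt
      linarith
    have hj'ne : j' ≠ l := Finset.ne_of_mem_erase hj'mem
    set E := Real.exp (ε * X l / 2) with hEdef
    have hE1 : ε * X l / 2 + 1 ≤ E := by
      have := Real.add_one_le_exp (ε * X l / 2)
      linarith
    have hE1' : (1:ℝ) ≤ E := Real.one_le_exp (by positivity)
    have hEE : Real.exp (αh l * X l) = Real.exp (α l * X l) * (E * E) := by
      rw [hEdef, ← Real.exp_add, ← Real.exp_add]
      congr 1; simp only [hεdef]; ring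
    have ha1 : (1:ℝ) ≤ Real.exp (α l * X l) :=
      Real.one_le_exp (mul_nonneg (hα l) (hX l).1)
    set a := Real.exp (α l * X l) with hadef
    have hkey : (E - 1) / ((m : ℝ) * Real.exp B) ≤
        ∑ i, |Real.exp (α i * X i) / S - Real.exp (αh i * X i) / T| := by
      by_cases hT : T ≤ S * E
      · -- use coordinate l
        have hstep : a * (E * E) / T - a / S ≥ (E - 1) / ((m:ℝ) * Real.exp B) := by
          have h1 : a * E / S ≤ a * (E * E) / T := by
            rw [div_le_div_iff₀ hS0 hT0]
            nlinarith [mul_le_mul_of_nonneg_left hT (show (0:ℝ) ≤ a * E by nlinarith)]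
          have h2 : (E - 1) / ((m:ℝ) * Real.exp B) ≤ a * (E - 1) / S := by
            have hE0 : (0:ℝ) ≤ E - 1 := by linarith
            exact div_le_div₀ (mul_nonneg (by linarith) hE0)
              (le_mul_of_one_le_left hE0 ha1) hS0 hSle
          have h3 : a * (E - 1) / S = a * E / S - a / S := by ring
          linarith
        have hterm : (E - 1) / ((m:ℝ) * Real.exp B) ≤
            |Real.exp (α l * X l) / S - Real.exp (αh l * X l) / T| := by
          rw [hEE, ← hadef]
          rw [abs_sub_comm]
          calc (E - 1) / ((m:ℝ) * Real.exp B) ≤ a * (E * E) / T - a / S := hstep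
            _ ≤ |a * (E * E) / T - a / S| := le_abs_self _
        calc (E - 1) / ((m:ℝ) * Real.exp B) ≤ _ := hterm
          _ ≤ _ := Finset.single_le_sum (f := fun i =>
              |Real.exp (α i * X i) / S - Real.exp (αh i * X i) / T|)
              (fun i _ => abs_nonneg _) (Finset.mem_univ l)
      · -- use coordinate j'
        push_neg at hT
        set b := Real.exp (αh j' * X j') with hbdef
        have hb1 : (1:ℝ) ≤ b := Real.one_le_exp (mul_nonneg (hαh j') (hX j').1)
        have hbb : b ≤ Real.exp (α j' * X j') :=
          Real.exp_le_exp.2 (mul_le_mul_of_nonneg_right hj' (hX j').1)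
        have hstep : Real.exp (α j' * X j') / S - b / T ≥ (E - 1) / ((m:ℝ) * Real.exp B) := by
          have h1 : b / S - b / T ≤ Real.exp (α j' * X j') / S - b / T := by
            have hh : b / S ≤ Real.exp (α j' * X j') / S := by gcongr
            linarith
          have h2 : b / S - b / T = b * (T - S) / (S * T) := by
            field_simp
          have h3 : b * (E - 1) / T ≤ b * (T - S) / (S * T) := by
            rw [div_le_div_iff₀ hT0 (mul_pos hS0 hT0)]
            have hb0 : (0:ℝ) ≤ b * T := mul_nonneg (by linarith) hT0.le
            nlinarith [mul_le_mul_of_nonneg_left (show S * E - S ≤ T - S by linarith) hb0]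
          have h4 : (E - 1) / ((m:ℝ) * Real.exp B) ≤ b * (E - 1) / T := by
            have hE0 : (0:ℝ) ≤ E - 1 := by linarith
            exact div_le_div₀ (mul_nonneg (by linarith) hE0)
              (le_mul_of_one_le_left hE0 hb1) hT0 hTle
          linarith
        have hterm : (E - 1) / ((m:ℝ) * Real.exp B) ≤
            |Real.exp (α j' * X j') / S - Real.exp (αh j' * X j') / T| := by
          rw [← hbdef]
          calc (E - 1) / ((m:ℝ) * Real.exp B) ≤ Real.exp (α j' * X j') / S - b / T := hstep
            _ ≤ |Real.exp (α j' * X j') / S - b / T| := le_abs_self _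
        calc (E - 1) / ((m:ℝ) * Real.exp B) ≤ _ := hterm
          _ ≤ _ := Finset.single_le_sum (f := fun i =>
              |Real.exp (α i * X i) / S - Real.exp (αh i * X i) / T|)
              (fun i _ => abs_nonneg _) (Finset.mem_univ j')
    -- final arithmetic
    have hfin : (1 / ((m : ℝ) ^ 2 * Real.exp (2 * B))) * (X l * ε)
        ≤ (E - 1) / ((m : ℝ) * Real.exp B) := by
      have hhalf : ε * X l / 2 ≤ E - 1 := by linarith
      have hmono : (X l * ε / 2) / ((m:ℝ) * Real.exp B) ≤ (E - 1) / ((m:ℝ) * Real.exp B) := by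
        gcongr
        linarith
      have hden : 2 * ((m:ℝ) * Real.exp B) ≤ (m:ℝ) ^ 2 * Real.exp (2 * B) := by
        have hexp : Real.exp (2 * B) = Real.exp B * Real.exp B := by
          rw [← Real.exp_add]; ring_nf
        have heB : (1:ℝ) ≤ Real.exp B := Real.one_le_exp (by linarith)
        have h2m : (2:ℝ) ≤ (m:ℝ) * Real.exp B := by nlinarith
        rw [hexp]
        nlinarith [mul_le_mul_of_nonneg_left h2m hMe.le]
      have h5 : (1 / ((m : ℝ) ^ 2 * Real.exp (2 * B))) * (X l * ε)
          = (X l * ε) / ((m:ℝ) ^ 2 * Real.exp (2 * B)) := by ring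
      rw [h5]
      calc (X l * ε) / ((m:ℝ) ^ 2 * Real.exp (2 * B))
          ≤ (X l * ε) / (2 * ((m:ℝ) * Real.exp B)) := by
            gcongr
            all_goals first
            | positivity
            | exact hden
        _ = (X l * ε / 2) / ((m:ℝ) * Real.exp B) := by ring
        _ ≤ (E - 1) / ((m:ℝ) * Real.exp B) := hmono
    linarith

set_option maxHeartbeats 1000000 in
/-- Lower bound on the total variation distance (Σ-convention) between two
softmax distributions over indices, in terms of the weighted gap
`maxᵢ Xᵢ|αᵢ − α̂ᵢ|`. -/
theorem stmt_13 {m : ℕ} (hm : 2 ≤ m) (B : ℝ) (hB : 1 ≤ B)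
    (X α αh : Fin m → ℝ)
    (hX : ∀ i, 0 ≤ X i ∧ X i ≤ B)
    (hα : ∀ i, 0 ≤ α i) (hαsum : ∑ i, α i = 1)
    (hαh : ∀ i, 0 ≤ αh i) (hαhsum : ∑ i, αh i = 1)
    (P : (Fin m → ℝ) → Fin m → ℝ)
    (hP : ∀ β i, P β i = Real.exp (β i * X i) / ∑ j, Real.exp (β j * X j)) :
    ∀ l, (1 / ((m : ℝ) ^ 2 * Real.exp (2 * B))) * (X l * |α l - αh l|) ≤
      ∑ i, |P α i - P αh i| := by
  intro l
  simp only [hP]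
  rcases le_total (α l) (αh l) with h | h
  · rw [abs_sub_comm, abs_of_nonneg (by linarith : (0:ℝ) ≤ αh l - α l)]
    exact aux_main hm B hB X α αh hX hα hαsum hαh hαhsum l h
  · rw [abs_of_nonneg (by linarith : (0:ℝ) ≤ α l - αh l)]
    have := aux_main hm B hB X αh α hX hαh hαhsum hα hαsum l h
    calc (1 / ((m : ℝ) ^ 2 * Real.exp (2 * B))) * (X l * (α l - αh l)) ≤
        ∑ i, |Real.exp (αh i * X i) / (∑ j, Real.exp (αh j * X j)) -
              Real.exp (α i * X i) / (∑ j, Real.exp (α j * X j))| := this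
      _ = _ := by
          apply Finset.sum_congr rfl
          intro i _
          rw [abs_sub_comm]
end

section
/- Let m ≥ 2, B ≥ 1, X, X* ∈ [0, B]^m with |X_i − X*_i| ≤ δ_i for each i, and α̂ ∈ Δ_{m−1}. Define softmax distributions P(i) ∝ exp(α̂_i X_i) and P*(i) ∝ exp(α̂_i X*_i). Then the total variation distance Σ_i |P(i) − P*(i)| is at most (e^{2B}/m) · Σ_i δ_i α̂_i. -/
open scoped BigOperators

lemma exp_lip_aux {a b c : ℝ} (ha : a ≤ c) (hb : b ≤ c) :
    |Real.exp a - Real.exp b| ≤ Real.exp c * |a - b| := by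
  wlog h : b ≤ a generalizing a b
  · rw [abs_sub_comm, abs_sub_comm a b]; exact this hb ha (le_of_not_ge h)
  rw [abs_of_nonneg (sub_nonneg.2 (Real.exp_le_exp.2 h)),
    abs_of_nonneg (sub_nonneg.2 h)]
  have h1 : (b - a) + 1 ≤ Real.exp (b - a) := Real.add_one_le_exp _
  have h2 : Real.exp (b - a) * Real.exp a = Real.exp b := by
    rw [← Real.exp_add]; ring_nf
  have h3 : Real.exp a ≤ Real.exp c := Real.exp_le_exp.2 ha
  have h4 : (0:ℝ) < Real.exp a := Real.exp_pos a
  nlinarith [mul_le_mul_of_nonneg_right h3 (sub_nonneg.2 h)]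

/-- Upper bound on the total variation distance (Σ-convention) between the
softmax distributions induced by nearby score vectors `X` and `X*`. -/
theorem stmt_14 {m : ℕ} (hm : 2 ≤ m) (B : ℝ) (hB : 1 ≤ B)
    (X Xstar δ : Fin m → ℝ)
    (hX : ∀ i, 0 ≤ X i ∧ X i ≤ B)
    (hXstar : ∀ i, 0 ≤ Xstar i ∧ Xstar i ≤ B)
    (hδ : ∀ i, |X i - Xstar i| ≤ δ i)
    (αh : Fin m → ℝ) (hαh : ∀ i, 0 ≤ αh i) (hαhsum : ∑ i, αh i = 1)
    (P Pstar : Fin m → ℝ)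
    (hP : ∀ i, P i = Real.exp (αh i * X i) / ∑ j, Real.exp (αh j * X j))
    (hPstar : ∀ i, Pstar i =
      Real.exp (αh i * Xstar i) / ∑ j, Real.exp (αh j * Xstar j)) :
    ∑ i, |P i - Pstar i| ≤ (Real.exp (2 * B) / m) * ∑ i, δ i * αh i := by
  have hm0 : (0:ℝ) < m := by positivity
  set S : ℝ := ∑ j, Real.exp (αh j * X j) with hSdef
  set T : ℝ := ∑ j, Real.exp (αh j * Xstar j) with hTdef
  have hSm : (m:ℝ) ≤ S := by
    have : ∀ j ∈ Finset.univ, (1:ℝ) ≤ Real.exp (αh j * X j) := fun j _ =>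
      Real.one_le_exp (mul_nonneg (hαh j) (hX j).1)
    calc (m:ℝ) = ∑ _j : Fin m, (1:ℝ) := by simp
    _ ≤ S := Finset.sum_le_sum this
  have hTm : (m:ℝ) ≤ T := by
    have : ∀ j ∈ Finset.univ, (1:ℝ) ≤ Real.exp (αh j * Xstar j) := fun j _ =>
      Real.one_le_exp (mul_nonneg (hαh j) (hXstar j).1)
    calc (m:ℝ) = ∑ _j : Fin m, (1:ℝ) := by simp
    _ ≤ T := Finset.sum_le_sum this
  have hSpos : 0 < S := lt_of_lt_of_le hm0 hSm
  have hTpos : 0 < T := lt_of_lt_of_le hm0 hTm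
  have hα1 : ∀ i, αh i ≤ 1 := by
    intro i
    calc αh i ≤ ∑ j, αh j :=
      Finset.single_le_sum (fun j _ => hαh j) (Finset.mem_univ i)
    _ = 1 := hαhsum
  have hδ0 : ∀ i, 0 ≤ δ i := fun i => le_trans (abs_nonneg _) (hδ i)
  have hsum0 : 0 ≤ ∑ i, δ i * αh i :=
    Finset.sum_nonneg fun i _ => mul_nonneg (hδ0 i) (hαh i)
  -- key: per-coordinate Lipschitz bound for exp differences
  have key : ∀ i, |Real.exp (αh i * X i) - Real.exp (αh i * Xstar i)| ≤
      Real.exp B * (δ i * αh i) := by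
    intro i
    have haB : αh i * X i ≤ B := by
      calc αh i * X i ≤ 1 * B := mul_le_mul (hα1 i) (hX i).2 (hX i).1 zero_le_one
      _ = B := one_mul B
    have hbB : αh i * Xstar i ≤ B := by
      calc αh i * Xstar i ≤ 1 * B :=
        mul_le_mul (hα1 i) (hXstar i).2 (hXstar i).1 zero_le_one
      _ = B := one_mul B
    have habs : |αh i * X i - αh i * Xstar i| ≤ δ i * αh i := by
      rw [← mul_sub, abs_mul, abs_of_nonneg (hαh i), mul_comm]
      exact mul_le_mul_of_nonneg_right (hδ i) (hαh i)
    calc |Real.exp (αh i * X i) - Real.exp (αh i * Xstar i)|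
        ≤ Real.exp B * |αh i * X i - αh i * Xstar i| := exp_lip_aux haB hbB
      _ ≤ Real.exp B * (δ i * αh i) :=
        mul_le_mul_of_nonneg_left habs (Real.exp_pos B).le
  set D : ℝ := ∑ i, |Real.exp (αh i * X i) - Real.exp (αh i * Xstar i)| with hDdef
  have hD0 : 0 ≤ D := Finset.sum_nonneg fun i _ => abs_nonneg _
  have hDle : D ≤ Real.exp B * ∑ i, δ i * αh i := by
    rw [Finset.mul_sum]
    exact Finset.sum_le_sum fun i _ => key i
  have hTS : |T - S| ≤ D := by
    rw [abs_sub_comm]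
    calc |S - T| = |∑ i, (Real.exp (αh i * X i) - Real.exp (αh i * Xstar i))| := by
          rw [Finset.sum_sub_distrib]
      _ ≤ D := Finset.abs_sum_le_sum_abs _ _
  -- per-coordinate decomposition
  have hcoord : ∀ i, |P i - Pstar i| ≤
      |Real.exp (αh i * X i) - Real.exp (αh i * Xstar i)| / S +
      Real.exp (αh i * Xstar i) * |T - S| / (S * T) := by
    intro i
    have hdecomp : P i - Pstar i =
        (Real.exp (αh i * X i) - Real.exp (αh i * Xstar i)) / S +
        Real.exp (αh i * Xstar i) * (T - S) / (S * T) := by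
      rw [hP, hPstar]
      field_simp
      ring
    rw [hdecomp]
    calc |(Real.exp (αh i * X i) - Real.exp (αh i * Xstar i)) / S +
        Real.exp (αh i * Xstar i) * (T - S) / (S * T)|
        ≤ |(Real.exp (αh i * X i) - Real.exp (αh i * Xstar i)) / S| +
          |Real.exp (αh i * Xstar i) * (T - S) / (S * T)| := abs_add_le _ _
      _ = |Real.exp (αh i * X i) - Real.exp (αh i * Xstar i)| / S +
          Real.exp (αh i * Xstar i) * |T - S| / (S * T) := by
          rw [abs_div, abs_div, abs_mul, abs_of_pos hSpos, abs_mul,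
            abs_of_pos hSpos, abs_of_pos hTpos, abs_of_pos (Real.exp_pos _)]
  have hmain : ∑ i, |P i - Pstar i| ≤ 2 * D / S := by
    calc ∑ i, |P i - Pstar i| ≤
        ∑ i, (|Real.exp (αh i * X i) - Real.exp (αh i * Xstar i)| / S +
          Real.exp (αh i * Xstar i) * |T - S| / (S * T)) :=
          Finset.sum_le_sum fun i _ => hcoord i
      _ = D / S + T * |T - S| / (S * T) := by
          rw [Finset.sum_add_distrib, ← Finset.sum_div]
          congr 1
          rw [← Finset.sum_div, ← Finset.sum_mul]
      _ = D / S + |T - S| / S := by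
          congr 1
          rw [mul_comm S T, mul_div_mul_left _ _ (ne_of_gt hTpos)]
      _ ≤ D / S + D / S := by gcongr
      _ = 2 * D / S := by ring
  calc ∑ i, |P i - Pstar i| ≤ 2 * D / S := hmain
    _ ≤ 2 * D / m := by
        apply div_le_div_of_nonneg_left (by linarith) hm0 hSm
    _ ≤ (Real.exp (2 * B) / m) * ∑ i, δ i * αh i := by
        rw [div_mul_eq_mul_div]
        apply (div_le_div_iff_of_pos_right hm0).2
        have hee : Real.exp (2 * B) = Real.exp B * Real.exp B := by
          rw [two_mul, Real.exp_add]
        have h2 : (2:ℝ) ≤ Real.exp B := by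
          have h3 : (2:ℝ) ≤ Real.exp 1 := by
            have := Real.add_one_le_exp (1:ℝ); linarith
          exact h3.trans (Real.exp_le_exp.2 hB)
        have h2e : 2 * Real.exp B ≤ Real.exp (2 * B) := by
          rw [hee]; nlinarith [Real.exp_pos B]
        have := mul_le_mul_of_nonneg_right h2e hsum0
        nlinarith [mul_le_mul_of_nonneg_left hDle (by norm_num : (0:ℝ) ≤ 2)]
end
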